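/- arXiv:2211.11731 — 4 statements merged into one kernel-verified Lean document; each statement's English description precedes it below -/
import Mathlib

section
/- Let φ = (√5 - 1)/2 and H(x) = -x·log x - (1-x)·log(1-x). For all x ∈ [φ, 1], φ·H(x²) ≥ x·H(x). -/
/-!
Write `D c x = c H(x²) - x H(x)`. Since `φ² = 1 - φ`, we have `H(φ²) = H(1 - φ) = H(φ)`, so
`D φ φ = 0`; and `1 + φ = 1/φ` gives `∂ₓD φ φ = 0` too, while `D c 1 = 0` for every `c`. Thus `φ`
is a double zero of `D φ`. Numerically `∂ₓ²D ≥ 0` on `[φ, 0.84]` and `∂ₓD ≥ 0` on `[0.84, 0.9]`,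
so `D` increases from `0` on `[φ, 0.9]`; and `∂ₓ²D ≤ 0` on `[0.9, 1)`, so `D` is concave on
`[0.9, 1]` and nonnegative at both ends.

The three sign conditions are proved for every `c ∈ [0.618, 0.61804]`: each logarithm is replaced
by a tangent-line bound at a point whose logarithm is a combination of `log 2` and `log 3`, which
leaves a polynomial inequality on a box.
-/

open Real Set

lemma log_le_log_add_div_sub_one {t r : ℝ} (ht : 0 < t) (hr : 0 < r) :
    log t ≤ log r + t / r - 1 := by
  have h := log_le_sub_one_of_pos (div_pos ht hr)
  rw [log_div ht.ne' hr.ne'] at h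
  linarith

lemma mul_log_add_one_sub_le_mul_log {t r : ℝ} (ht : 0 < t) (hr : 0 < r) :
    t * (log r + 1) - r ≤ t * log t := by
  have h := mul_le_mul_of_nonneg_left (one_sub_inv_le_log_of_pos (div_pos ht hr)) ht.le
  rw [log_div ht.ne' hr.ne', inv_div, mul_sub, mul_one, mul_div_cancel₀ _ ht.ne'] at h
  linarith

lemma nonneg_of_hasDerivAt_nonneg {f f' : ℝ → ℝ} {a b x : ℝ}
    (hf : ∀ y ∈ Icc a b, HasDerivAt f (f' y) y) (hf' : ∀ y ∈ Ioo a b, 0 ≤ f' y)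
    (ha : 0 ≤ f a) (hx : x ∈ Icc a b) : 0 ≤ f x := by
  have hmono : MonotoneOn f (Icc a b) :=
    monotoneOn_of_hasDerivWithinAt_nonneg (convex_Icc a b)
      (fun y hy ↦ (hf y hy).continuousAt.continuousWithinAt)
      (fun y hy ↦ (hf y (interior_subset hy)).hasDerivWithinAt)
      (fun y hy ↦ hf' y (by rwa [interior_Icc] at hy))
  exact ha.trans (hmono (left_mem_Icc.2 (hx.1.trans hx.2)) hx hx.1)

lemma binEntropy_eq (x : ℝ) : binEntropy x = -x * log x - (1 - x) * log (1 - x) := by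
  rw [binEntropy, log_inv, log_inv]; ring

noncomputable def entropyGap (c x : ℝ) : ℝ := c * binEntropy (x ^ 2) - x * binEntropy x

noncomputable def entropyGapDeriv (c x : ℝ) : ℝ :=
  (2 * c * x + 1 - 2 * x) * log (1 - x) + 2 * c * x * log (1 + x) + (2 - 4 * c) * x * log x

noncomputable def entropyGapDeriv2 (c x : ℝ) : ℝ :=
  (2 * c - 2) * log (1 - x) + 2 * c * log (1 + x) + (2 - 4 * c) * log x
    + (1 + x - 4 * c) / (1 - x ^ 2)

lemma hasDerivAt_entropyGap (c : ℝ) {x : ℝ} (hx₀ : 0 < x) (hx₁ : x < 1) :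
    HasDerivAt (entropyGap c) (entropyGapDeriv c x) x := by
  have hsq := (hasDerivAt_binEntropy (by positivity) (by nlinarith)).comp x (hasDerivAt_pow 2 x)
  have h := (hsq.const_mul c).sub
    ((hasDerivAt_id' x).mul (hasDerivAt_binEntropy hx₀.ne' hx₁.ne))
  refine h.congr_deriv ?_
  rw [entropyGapDeriv, binEntropy_eq, show 1 - x ^ 2 = (1 - x) * (1 + x) by ring,
    log_mul (by linarith) (by linarith), log_pow]
  push_cast
  ring

lemma hasDerivAt_entropyGapDeriv (c : ℝ) {x : ℝ} (hx₀ : 0 < x) (hx₁ : x < 1) :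
    HasDerivAt (entropyGapDeriv c) (entropyGapDeriv2 c x) x := by
  have h₁ : HasDerivAt (fun y ↦ log (1 - y)) (-1 / (1 - x)) x :=
    ((hasDerivAt_id' x).const_sub 1).log (by linarith)
  have h₂ : HasDerivAt (fun y ↦ log (1 + y)) (1 / (1 + x)) x :=
    ((hasDerivAt_id' x).const_add 1).log (by linarith)
  have h := (((((hasDerivAt_id' x).const_mul (2 * c)).add_const 1).sub
    ((hasDerivAt_id' x).const_mul 2)).mul h₁).add
    (((hasDerivAt_id' x).const_mul (2 * c)).mul h₂) |>.add
    (((hasDerivAt_id' x).const_mul (2 - 4 * c)).mul (hasDerivAt_log hx₀.ne'))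
  refine h.congr_deriv ?_
  have : 1 - x ≠ 0 := by linarith
  have : 1 + x ≠ 0 := by linarith
  rw [Pi.sub_apply, entropyGapDeriv2, show 1 - x ^ 2 = (1 - x) * (1 + x) by ring]
  field_simp
  ring

lemma entropyGapDeriv2_mul {c x : ℝ} (hx : x ^ 2 ≠ 1) :
    entropyGapDeriv2 c x * (1 - x ^ 2) = (2 * c - 2) * (1 - x ^ 2) * log (1 - x)
      + 2 * c * (1 - x) * ((1 + x) * log (1 + x)) + (2 - 4 * c) * (1 - x ^ 2) * log x
      + (1 + x - 4 * c) := by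
  have : 1 - x ^ 2 ≠ 0 := sub_ne_zero.2 (Ne.symm hx)
  rw [entropyGapDeriv2]
  field_simp
  ring

lemma entropyGap_one (c : ℝ) : entropyGap c 1 = 0 := by simp [entropyGap]

lemma entropyGap_self {c : ℝ} (hc : c ^ 2 = 1 - c) : entropyGap c c = 0 := by
  rw [entropyGap, hc, binEntropy_one_sub, sub_self]

lemma entropyGapDeriv_self {c : ℝ} (hc : c ^ 2 = 1 - c) (hc₀ : 0 < c) :
    entropyGapDeriv c c = 0 := by
  have h₁ : log (1 - c) = 2 * log c := by rw [← hc, log_pow]; push_cast; ring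
  have h₂ : log (1 + c) = -log c := by
    rw [← log_inv]; congr 1; field_simp; linear_combination hc
  rw [entropyGapDeriv, h₁, h₂]
  linear_combination (-2 * log c) * hc

section Gap

variable {c x : ℝ}

lemma entropyGapDeriv2_nonneg (hc : c ∈ Icc 0.618 0.61804) (hx : x ∈ Icc 0.618 0.84) :
    0 ≤ entropyGapDeriv2 c x := by
  obtain ⟨hc₀, hc₁⟩ := hc
  obtain ⟨hx₀, hx₁⟩ := hx
  have hl2 := log_two_gt_d9; have hl2' := log_two_lt_d9
  have hl3 := log_three_gt_d9; have hl3' := log_three_lt_d9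
  have hA : log (1 - x) ≤ -1.504 + 9 / 2 * (1 - x) - 1 := by
    have h := log_le_log_add_div_sub_one (t := 1 - x) (r := 2 / 3 ^ 2) (by linarith) (by norm_num)
    rw [log_div (by norm_num) (by norm_num), log_pow] at h
    norm_num at h ⊢; linarith
  have hB : 1.575 * (1 + x) - 16 / 9 ≤ (1 + x) * log (1 + x) := by
    have h := mul_log_add_one_sub_le_mul_log (t := 1 + x) (r := 2 ^ 4 / 3 ^ 2)
      (by linarith) (by norm_num)
    rw [log_div (by norm_num) (by norm_num), log_pow, log_pow] at h
    norm_num at h ⊢; nlinarith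
  have hC : log x ≤ -0.287 + 4 / 3 * x - 1 := by
    have h := log_le_log_add_div_sub_one (t := x) (r := 3 / 2 ^ 2) (by linarith) (by norm_num)
    rw [log_div (by norm_num) (by norm_num), log_pow] at h
    norm_num at h ⊢; linarith
  have hq : 0 < 1 - x ^ 2 := by nlinarith
  have key : 0 ≤ (2 * c - 2) * (1 - x ^ 2) * (-1.504 + 9 / 2 * (1 - x) - 1)
      + 2 * c * (1 - x) * (1.575 * (1 + x) - 16 / 9)
      + (2 - 4 * c) * (1 - x ^ 2) * (-0.287 + 4 / 3 * x - 1) + (1 + x - 4 * c) := by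
    have p := sub_nonneg.2 hx₀; have q := sub_nonneg.2 hx₁
    have u := sub_nonneg.2 hc₀; have v := sub_nonneg.2 hc₁
    have pq := mul_nonneg p q
    nlinarith [mul_nonneg pq p, mul_nonneg pq q, mul_nonneg pq u, mul_nonneg pq v,
      mul_nonneg u p, mul_nonneg u q, mul_nonneg v p, mul_nonneg v q]
  refine nonneg_of_mul_nonneg_left ?_ hq
  rw [entropyGapDeriv2_mul (by nlinarith)]
  have e₁ := mul_le_mul_of_nonpos_left hA (by nlinarith : (2 * c - 2) * (1 - x ^ 2) ≤ 0)
  have e₂ := mul_le_mul_of_nonneg_left hB (by nlinarith : 0 ≤ 2 * c * (1 - x))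
  have e₃ := mul_le_mul_of_nonpos_left hC (by nlinarith : (2 - 4 * c) * (1 - x ^ 2) ≤ 0)
  linarith

lemma entropyGapDeriv_nonneg_of_mem_Icc (hc : c ∈ Icc 0.618 0.61804) (hx : x ∈ Icc 0.84 0.9) :
    0 ≤ entropyGapDeriv c x := by
  obtain ⟨hc₀, hc₁⟩ := hc
  obtain ⟨hx₀, hx₁⟩ := hx
  have hl2 := log_two_gt_d9; have hl2' := log_two_lt_d9
  have hl3 := log_three_gt_d9; have hl3' := log_three_lt_d9
  have hA : (1 - x) * (-1.1973) - 1 / 9 ≤ (1 - x) * log (1 - x) := by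
    have h := mul_log_add_one_sub_le_mul_log (t := 1 - x) (r := 1 / 3 ^ 2)
      (by linarith) (by norm_num)
    rw [one_div, log_inv, log_pow] at h
    norm_num at h ⊢; nlinarith
  have hB : (1 + x) * 1.6931 - 2 ≤ (1 + x) * log (1 + x) := by
    have h := mul_log_add_one_sub_le_mul_log (t := 1 + x) (r := 2) (by linarith) (by norm_num)
    nlinarith
  have hC : log x ≤ -0.1177 + 9 / 8 * x - 1 := by
    have h := log_le_log_add_div_sub_one (t := x) (r := 2 ^ 3 / 3 ^ 2) (by linarith) (by norm_num)
    rw [log_div (by norm_num) (by norm_num), log_pow, log_pow] at h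
    norm_num at h ⊢; linarith
  have hq : 0 < 1 - x ^ 2 := by nlinarith
  have key : 0 ≤ (2 * c * x + 1 - 2 * x) * (1 + x) * ((1 - x) * (-1.1973) - 1 / 9)
      + 2 * c * x * (1 - x) * ((1 + x) * 1.6931 - 2)
      + (2 - 4 * c) * x * (1 - x ^ 2) * (-0.1177 + 9 / 8 * x - 1) := by
    have p := sub_nonneg.2 hx₀; have q := sub_nonneg.2 hx₁
    have u := sub_nonneg.2 hc₀; have v := sub_nonneg.2 hc₁
    have pq := mul_nonneg p q
    nlinarith [mul_nonneg pq p, mul_nonneg pq q, mul_nonneg pq u, mul_nonneg pq v,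
      mul_nonneg u p, mul_nonneg u q, mul_nonneg v p, mul_nonneg v q]
  refine nonneg_of_mul_nonneg_left ?_ hq
  have e : entropyGapDeriv c x * (1 - x ^ 2)
      = (2 * c * x + 1 - 2 * x) * (1 + x) * ((1 - x) * log (1 - x))
        + 2 * c * x * (1 - x) * ((1 + x) * log (1 + x))
        + (2 - 4 * c) * x * (1 - x ^ 2) * log x := by
    rw [entropyGapDeriv]; ring
  have e₁ := mul_le_mul_of_nonneg_left hA
    (by nlinarith : 0 ≤ (2 * c * x + 1 - 2 * x) * (1 + x))
  have e₂ := mul_le_mul_of_nonneg_left hB (by nlinarith : 0 ≤ 2 * c * x * (1 - x))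
  have e₃ := mul_le_mul_of_nonpos_left hC
    (mul_nonpos_of_nonpos_of_nonneg (by nlinarith) hq.le : (2 - 4 * c) * x * (1 - x ^ 2) ≤ 0)
  linarith

lemma entropyGapDeriv2_nonpos (hc : c ∈ Icc 0.618 0.61804) (hx : x ∈ Ioo 0.9 1) :
    entropyGapDeriv2 c x ≤ 0 := by
  obtain ⟨hc₀, hc₁⟩ := hc
  obtain ⟨hx₀, hx₁⟩ := hx
  have hl2 := log_two_gt_d9; have hl2' := log_two_lt_d9
  have hA : (1 - x) * (-1.0795) - 1 / 8 ≤ (1 - x) * log (1 - x) := by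
    have h := mul_log_add_one_sub_le_mul_log (t := 1 - x) (r := 1 / 2 ^ 3)
      (by linarith) (by norm_num)
    rw [one_div, log_inv, log_pow] at h
    norm_num at h ⊢; nlinarith
  have hB : log (1 + x) ≤ 0.6932 + (1 + x) / 2 - 1 := by
    have h := log_le_log_add_div_sub_one (t := 1 + x) (r := 2) (by linarith) (by norm_num)
    linarith
  have hC : x - 1 ≤ x * log x := by
    simpa using mul_log_add_one_sub_le_mul_log (t := x) (r := 1) (by linarith) (by norm_num)
  have hq : 0 < 1 - x ^ 2 := by nlinarith
  have key : (2 * c - 2) * x * (1 + x) * ((1 - x) * (-1.0795) - 1 / 8)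
      + 2 * c * x * (1 - x ^ 2) * (0.6932 + (1 + x) / 2 - 1)
      + (2 - 4 * c) * (1 - x ^ 2) * (x - 1) + x * (1 + x - 4 * c) ≤ 0 := by
    have p := sub_nonneg.2 hx₀.le; have q := sub_nonneg.2 hx₁.le
    have u := sub_nonneg.2 hc₀; have v := sub_nonneg.2 hc₁
    have pq := mul_nonneg p q
    nlinarith [mul_nonneg pq p, mul_nonneg pq q, mul_nonneg pq u, mul_nonneg pq v,
      mul_nonneg u p, mul_nonneg u q, mul_nonneg v p, mul_nonneg v q]
  refine nonpos_of_mul_nonpos_left ?_ (mul_pos hq (by linarith : 0 < x))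
  rw [← mul_assoc, entropyGapDeriv2_mul (by nlinarith)]
  have e₁ := mul_le_mul_of_nonpos_left hA (by nlinarith : (2 * c - 2) * x * (1 + x) ≤ 0)
  have e₂ := mul_le_mul_of_nonneg_left hB (by nlinarith : 0 ≤ 2 * c * x * (1 - x ^ 2))
  have e₃ := mul_le_mul_of_nonpos_left hC (by nlinarith : (2 - 4 * c) * (1 - x ^ 2) ≤ 0)
  linarith

lemma entropyGapDeriv_nonneg (hc : c ∈ Icc 0.618 0.61804) (hc₂ : c ^ 2 = 1 - c)
    (hx : x ∈ Icc c 0.9) : 0 ≤ entropyGapDeriv c x := by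
  have hc₀ : (0.618 : ℝ) ≤ c := hc.1
  rcases le_total x 0.84 with h | h
  · refine nonneg_of_hasDerivAt_nonneg (f' := entropyGapDeriv2 c) (b := 0.84)
      (fun y hy ↦ ?_) (fun y hy ↦ ?_) (entropyGapDeriv_self hc₂ (by linarith)).ge ⟨hx.1, h⟩
    · exact hasDerivAt_entropyGapDeriv c (by linarith [hy.1]) (by linarith [hy.2])
    · exact entropyGapDeriv2_nonneg hc ⟨by linarith [hy.1], hy.2.le⟩
  · exact entropyGapDeriv_nonneg_of_mem_Icc hc ⟨h, hx.2⟩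

lemma entropyGap_nonneg_of_le_nine_tenths (hc : c ∈ Icc 0.618 0.61804) (hc₂ : c ^ 2 = 1 - c)
    (hx : x ∈ Icc c 0.9) : 0 ≤ entropyGap c x := by
  have hc₀ : (0.618 : ℝ) ≤ c := hc.1
  refine nonneg_of_hasDerivAt_nonneg (f' := entropyGapDeriv c) (fun y hy ↦ ?_)
    (fun y hy ↦ entropyGapDeriv_nonneg hc hc₂ (Ioo_subset_Icc_self hy))
    (entropyGap_self hc₂).ge hx
  exact hasDerivAt_entropyGap c (by linarith [hy.1]) (by linarith [hy.2])

lemma entropyGap_nonneg_of_nine_tenths_le (hc : c ∈ Icc 0.618 0.61804) (hc₂ : c ^ 2 = 1 - c)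
    (hx : x ∈ Icc 0.9 1) : 0 ≤ entropyGap c x := by
  have hconc : ConcaveOn ℝ (Icc 0.9 1) (entropyGap c) := by
    refine concaveOn_of_hasDerivWithinAt2_nonpos (f' := entropyGapDeriv c) (convex_Icc _ _)
      (by unfold entropyGap; fun_prop) (fun y hy ↦ ?_) (fun y hy ↦ ?_)
      (fun y hy ↦ entropyGapDeriv2_nonpos hc (by rwa [interior_Icc] at hy))
    all_goals rw [interior_Icc] at hy
    · exact (hasDerivAt_entropyGap c (by linarith [hy.1]) hy.2).hasDerivWithinAt
    · exact (hasDerivAt_entropyGapDeriv c (by linarith [hy.1]) hy.2).hasDerivWithinAt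
  have hleft : 0 ≤ entropyGap c 0.9 :=
    entropyGap_nonneg_of_le_nine_tenths hc hc₂ ⟨by linarith [hc.2], le_rfl⟩
  have h := hconc.min_le_of_mem_Icc (left_mem_Icc.2 (by norm_num))
    (right_mem_Icc.2 (by norm_num)) hx
  rw [entropyGap_one] at h
  exact (le_min hleft le_rfl).trans h

end Gap

theorem stmt1
    (φ : ℝ) (hφ : φ = (Real.sqrt 5 - 1) / 2)
    (H : ℝ → ℝ) (hH : ∀ x, H x = -x * Real.log x - (1 - x) * Real.log (1 - x)) :
    ∀ x ∈ Set.Icc φ 1, φ * H (x ^ 2) ≥ x * H x := by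
  intro x hx
  have h5 := sq_sqrt (show (0 : ℝ) ≤ 5 by norm_num)
  have hφ₂ : φ ^ 2 = 1 - φ := by rw [hφ]; linear_combination h5 / 4
  have hφI : φ ∈ Icc 0.618 0.61804 := by
    rw [hφ]; constructor <;> nlinarith [sqrt_nonneg 5]
  have hgap : 0 ≤ entropyGap φ x := by
    rcases le_total x 0.9 with h | h
    · exact entropyGap_nonneg_of_le_nine_tenths hφI hφ₂ ⟨hx.1, h⟩
    · exact entropyGap_nonneg_of_nine_tenths_le hφI hφ₂ ⟨h, hx.2⟩
  have hHb : H = binEntropy := funext fun y ↦ by rw [hH, binEntropy_eq]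
  rw [hHb, ge_iff_le, ← sub_nonneg]
  exact hgap
end

section
/- Let φ = (√5-1)/2 and H(x) = -x·log x - (1-x)·log(1-x). For all x ∈ [0.98, 1], φ·H(x²) ≥ x·H(x), with equality if and only if x = 1. -/
open Real

private lemma stmt9_aux (x a b c s p q : ℝ)
    (hx1 : (0.98:ℝ) ≤ x) (hlt : x < 1)
    (hs1 : (2.236:ℝ) < s) (hs2 : s < 3)
    (hp : 0 < p) (hq : 0 < q) (hpq : 16 * p < 7 * q)
    (ha : a < 0) (hcnn : 0 ≤ c) (hcle : c ≤ p)
    (hble : b ≤ -(p + 2 * q)) :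
    x * (-x * a - (1 - x) * b) <
      (s - 1) / 2 * (-(x ^ 2) * (2 * a) - (1 - x) * (1 + x) * (b + c)) := by
  have h1x : (0:ℝ) < 1 - x := by linarith
  have hA : 0 < (s - 2) * x ^ 2 * (-a) := by
    apply mul_pos (mul_pos (by linarith) (by nlinarith)) (by linarith)
  have hk : s - 2 ≤ (s - 1) / 2 * (1 + x) - x := by nlinarith [mul_nonneg (show (0:ℝ) ≤ 3 - s by linarith) (show (0:ℝ) ≤ 1 - x by linarith)]
  have hM : p + 2 * q ≤ -b := by linarith
  have hprod : (p + 2 * q) * (s - 2) ≤ (-b) * ((s - 1) / 2 * (1 + x) - x) :=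
    mul_le_mul hM hk (by linarith) (by linarith)
  have hc2 : (s - 1) / 2 * (1 + x) * c ≤ (s - 1) * p := by
    nlinarith [mul_le_mul (show (1:ℝ) + x ≤ 2 by linarith) hcle hcnn (by norm_num : (0:ℝ) ≤ 2)]
  have hcore : p < 2 * q * (s - 2) := by
    nlinarith [mul_lt_mul_of_pos_right hpq (show (0:ℝ) < s - 2 by linarith),
      mul_pos hp (show (0:ℝ) < s - 2 by linarith)]
  have hBpos : 0 < (-b) * ((s - 1) / 2 * (1 + x) - x) - (s - 1) / 2 * (1 + x) * c := by
    nlinarith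
  have hterm2 : 0 < (1 - x) * ((-b) * ((s - 1) / 2 * (1 + x) - x) - (s - 1) / 2 * (1 + x) * c) :=
    mul_pos h1x hBpos
  nlinarith [hA, hterm2]

theorem stmt9
    (φ : ℝ) (hφ : φ = (Real.sqrt 5 - 1) / 2)
    (H : ℝ → ℝ) (hH : ∀ x, H x = -x * Real.log x - (1 - x) * Real.log (1 - x)) :
    ∀ x ∈ Set.Icc (0.98 : ℝ) 1,
      φ * H (x ^ 2) ≥ x * H x ∧ (φ * H (x ^ 2) = x * H x ↔ x = 1) := by
  intro x hx
  obtain ⟨hx1, hx2⟩ := hx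
  rcases eq_or_lt_of_le hx2 with heq | hlt
  · subst heq
    constructor
    · norm_num [hH]
    · norm_num [hH]
  · have h0x : (0:ℝ) < x := by linarith
    have h1x : (0:ℝ) < 1 - x := by linarith
    have hs : Real.sqrt 5 ^ 2 = 5 := Real.sq_sqrt (by norm_num)
    have hs1 : (2.236:ℝ) < Real.sqrt 5 := by nlinarith [Real.sqrt_nonneg 5]
    have hsu : Real.sqrt 5 < 3 := by nlinarith [Real.sqrt_nonneg 5]
    have hlog2 : (0:ℝ) < Real.log 2 := Real.log_pos (by norm_num)
    have hlog5 : (0:ℝ) < Real.log 5 := Real.log_pos (by norm_num)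
    have hlogx : Real.log x < 0 := Real.log_neg h0x hlt
    have hcnn : 0 ≤ Real.log (1 + x) := Real.log_nonneg (by linarith)
    have hcle : Real.log (1 + x) ≤ Real.log 2 := Real.log_le_log (by linarith) (by linarith)
    have hlog50 : Real.log 50 = Real.log 2 + 2 * Real.log 5 := by
      rw [show (50:ℝ) = 2 * 5 ^ 2 by norm_num,
        Real.log_mul (by norm_num) (by positivity), Real.log_pow]
      push_cast; ring
    have hble : Real.log (1 - x) ≤ -(Real.log 2 + 2 * Real.log 5) := by
      have h1 : Real.log (1 - x) ≤ Real.log (1 / 50) :=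
        Real.log_le_log h1x (by norm_num; linarith)
      rw [one_div, Real.log_inv, hlog50] at h1
      exact h1
    have h1657 : 16 * Real.log 2 < 7 * Real.log 5 := by
      have h : Real.log ((2:ℝ) ^ 16) < Real.log ((5:ℝ) ^ 7) :=
        Real.log_lt_log (by positivity) (by norm_num)
      rw [Real.log_pow, Real.log_pow] at h
      push_cast at h
      linarith
    have hkey : x * H x < φ * H (x ^ 2) := by
      rw [hH, hH, hφ]
      have hx2log : Real.log (x ^ 2) = 2 * Real.log x := by
        rw [Real.log_pow]; push_cast; ring
      have hx2m : (1:ℝ) - x ^ 2 = (1 - x) * (1 + x) := by ring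
      have hlogm : Real.log (1 - x ^ 2) = Real.log (1 - x) + Real.log (1 + x) := by
        rw [hx2m, Real.log_mul (by linarith) (by linarith)]
      rw [hx2log, hlogm, hx2m]
      exact stmt9_aux x (Real.log x) (Real.log (1 - x)) (Real.log (1 + x)) (Real.sqrt 5)
        (Real.log 2) (Real.log 5) hx1 hlt hs1 hsu hlog2 hlog5 h1657 hlogx hcnn hcle hble
    refine ⟨le_of_lt hkey, ?_, fun h => absurd h (ne_of_lt hlt)⟩
    intro h
    exact absurd h.symm (ne_of_lt hkey)
end

section
/- Let φ = (√5-1)/2. For all ε ∈ (0, 0.02], ((2φ-1) + (1-φ)·ε)·log(1/ε) ≥ (1-ε)·(1 - φ·(1-ε)·(2-ε)) + φ·(2-ε)·log(2-ε). -/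
open Real

theorem stmt11
    (φ : ℝ) (hφ : φ = (Real.sqrt 5 - 1) / 2) :
    ∀ ε ∈ Set.Ioc (0 : ℝ) 0.02,
      ((2 * φ - 1) + (1 - φ) * ε) * Real.log (1 / ε) ≥
        (1 - ε) * (1 - φ * (1 - ε) * (2 - ε)) + φ * (2 - ε) * Real.log (2 - ε) := by
  rintro ε ⟨hε0, hε2⟩
  have hs : Real.sqrt 5 ^ 2 = 5 := Real.sq_sqrt (by norm_num)
  have hsn : (0:ℝ) ≤ Real.sqrt 5 := Real.sqrt_nonneg 5
  have hφ1 : 0.618 ≤ φ := by rw [hφ]; nlinarith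
  have hφ2 : φ ≤ 0.6181 := by rw [hφ]; nlinarith
  have hL2u : Real.log 2 < 0.6931471808 := Real.log_two_lt_d9
  have hL2l : 0.6931471803 < Real.log 2 := Real.log_two_gt_d9
  have hlog1 : Real.log (2 - ε) ≤ Real.log 2 := by
    apply Real.log_le_log (by linarith) (by linarith)
  have hlog0 : (0:ℝ) ≤ Real.log (2 - ε) := Real.log_nonneg (by linarith)
  have hlinv : 5 * Real.log 2 ≤ Real.log (1/ε) := by
    have h32 : Real.log 32 ≤ Real.log (1/ε) := by
      apply Real.log_le_log (by norm_num)
      rw [le_div_iff₀ hε0]; linarith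
    have : Real.log 32 = 5 * Real.log 2 := by
      rw [show (32:ℝ) = 2^5 by norm_num, Real.log_pow]; push_cast; ring
    linarith
  have hc : (0:ℝ) ≤ (2 * φ - 1) + (1 - φ) * ε := by nlinarith
  have h1 : ((2 * φ - 1) + (1 - φ) * ε) * (5 * Real.log 2) ≤
      ((2 * φ - 1) + (1 - φ) * ε) * Real.log (1/ε) :=
    mul_le_mul_of_nonneg_left hlinv hc
  have hc2 : (0:ℝ) ≤ φ * (2 - ε) := by nlinarith
  have h2 : φ * (2 - ε) * Real.log (2 - ε) ≤ φ * (2 - ε) * Real.log 2 :=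
    mul_le_mul_of_nonneg_left hlog1 hc2
  have hL20 : (0:ℝ) ≤ Real.log 2 := by linarith
  nlinarith [mul_nonneg hε0.le hε0.le, mul_nonneg (mul_nonneg hε0.le hε0.le) hε0.le,
    mul_nonneg hε0.le hL20, mul_nonneg (mul_nonneg hε0.le hε0.le) hL20]
end

section
/- Define L(x) = 2φ(1-x²)·log(x⁻² - 1) - 4φ - 2x²·log x + 2(x²-1)·log(1-x) + x + 2·log x + 1 with φ = (√5-1)/2. Then L restricted to [φ, 0.77] is Lipschitz with constant at most 15.5. -/
/-! Away from `0` and `1`, `L` is differentiable with derivative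
`-4φx log(x⁻² - 1) - 4x log x + 4x log(1 - x) + 3 + (2 - 4φ)/x`. On `[φ, 0.77]` the three
logarithms are bounded by `1`, `1` and `2` in absolute value (their arguments lie in
`[e⁻¹, e]`, `[e⁻¹, e]` and `[e⁻², e²]`), which bounds the derivative by `14.93`; the mean value
theorem does the rest. -/

open Real Set

noncomputable def Lfun (c x : ℝ) : ℝ :=
  2 * c * (1 - x ^ 2) * log (x⁻¹ ^ 2 - 1) - 4 * c - 2 * x ^ 2 * log x
    + 2 * (x ^ 2 - 1) * log (1 - x) + x + 2 * log x + 1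

noncomputable def Lderiv (c x : ℝ) : ℝ :=
  -(4 * c * x) * log (x⁻¹ ^ 2 - 1) - 4 * x * log x + 4 * x * log (1 - x) + 3
    + (2 - 4 * c) / x

lemma hasDerivAt_log_inv_sq_sub_one {x : ℝ} (hx0 : 0 < x) (hx1 : x < 1) :
    HasDerivAt (fun y ↦ log (y⁻¹ ^ 2 - 1)) (-2 / (x * (1 - x ^ 2))) x := by
  have hx : x ≠ 0 := hx0.ne'
  have hpos : x⁻¹ ^ 2 - 1 ≠ 0 := by
    have : 1 < x⁻¹ := one_lt_inv₀ hx0 |>.mpr hx1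
    nlinarith
  have h1 : 1 - x ^ 2 ≠ 0 := by nlinarith
  have hw : HasDerivAt (fun y : ℝ ↦ y⁻¹ ^ 2 - 1) (2 * x⁻¹ * -(x ^ 2)⁻¹) x := by
    simpa using ((hasDerivAt_inv hx).pow 2).sub_const 1
  refine (hw.log hpos).congr_deriv ?_
  field_simp

lemma hasDerivAt_Lfun (c : ℝ) {x : ℝ} (hx0 : 0 < x) (hx1 : x < 1) :
    HasDerivAt (Lfun c) (Lderiv c x) x := by
  have hx : x ≠ 0 := hx0.ne'
  have h1x : 1 - x ≠ 0 := by linarith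
  have h1x2 : 1 - x ^ 2 ≠ 0 := by nlinarith
  have hsq : HasDerivAt (fun y : ℝ ↦ y ^ 2) (2 * x) x := by simpa using hasDerivAt_pow 2 x
  have hlog := hasDerivAt_log hx
  have hlog1 : HasDerivAt (fun y ↦ log (1 - y)) (-1 / (1 - x)) x := by
    simpa using ((hasDerivAt_id x).const_sub 1).log h1x
  have := (((((((hsq.const_sub 1).const_mul (2 * c)).mul
    (hasDerivAt_log_inv_sq_sub_one hx0 hx1)).sub_const (4 * c)).sub
    ((hsq.const_mul 2).mul hlog)).add (((hsq.sub_const 1).const_mul 2).mul hlog1)).add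
    (hasDerivAt_id x)).add (hlog.const_mul 2) |>.add_const 1
  refine this.congr_deriv ?_
  unfold Lderiv
  field_simp
  ring

lemma abs_log_le_of_mem_Icc {y M : ℝ} (hy : y ∈ Icc (exp (-M)) (exp M)) : |log y| ≤ M := by
  have hy0 : 0 < y := (exp_pos _).trans_le hy.1
  rw [abs_le]
  exact ⟨(le_log_iff_exp_le hy0).2 hy.1, (log_le_iff_le_exp hy0).2 hy.2⟩

lemma exp_neg_one_lt : exp (-1) < 0.37 := by
  rw [exp_neg]
  have := exp_one_gt_d9
  rw [inv_lt_comm₀ (exp_pos 1) (by norm_num)]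
  linarith

lemma exp_neg_two_lt : exp (-2) < 0.14 := by
  have : exp (-2) = exp (-1) ^ 2 := by rw [← exp_nat_mul]; norm_num
  rw [this]
  have := exp_neg_one_lt
  nlinarith [exp_pos (-1)]

lemma abs_Lderiv_le {c x : ℝ} (hc : c ∈ Icc (0.618 : ℝ) 0.619) (hx : x ∈ Icc (0.618 : ℝ) 0.77) :
    |Lderiv c x| ≤ 15.5 := by
  obtain ⟨hc₁, hc₂⟩ := hc
  obtain ⟨hx₁, hx₂⟩ := hx
  have hx0 : 0 < x := by linarith
  have he1 := exp_neg_one_lt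
  have he2 := exp_neg_two_lt
  have hexp1 : (1.62 : ℝ) < exp 1 := by have := exp_one_gt_d9; linarith
  have hexp2 : (1 : ℝ) ≤ exp 2 := one_le_exp (by norm_num)
  have hinv : x⁻¹ ^ 2 - 1 ∈ Icc (exp (-1)) (exp 1) := by
    have h₁ : (0.77 : ℝ)⁻¹ ≤ x⁻¹ := inv_anti₀ hx0 hx₂
    have h₂ : x⁻¹ ≤ (0.618 : ℝ)⁻¹ := inv_anti₀ (by norm_num) hx₁
    constructor <;> norm_num at h₁ h₂ <;> nlinarith
  have hA := abs_log_le_of_mem_Icc hinv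
  have hB := abs_log_le_of_mem_Icc (M := 1) (y := x) ⟨by linarith, by linarith⟩
  have hC := abs_log_le_of_mem_Icc (M := 2) (y := 1 - x) ⟨by linarith, by linarith⟩
  have t₁ : |4 * c * x * log (x⁻¹ ^ 2 - 1)| ≤ 4 * 0.619 * 0.77 * 1 := by
    rw [abs_mul, abs_of_pos (by positivity)]; gcongr
  have t₂ : |4 * x * log x| ≤ 4 * 0.77 * 1 := by
    rw [abs_mul, abs_of_pos (by positivity)]; gcongr
  have t₃ : |4 * x * log (1 - x)| ≤ 4 * 0.77 * 2 := by
    rw [abs_mul, abs_of_pos (by positivity)]; gcongr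
  have t₄ : |(2 - 4 * c) / x| ≤ 0.78 := by
    rw [abs_div, abs_of_pos hx0, div_le_iff₀ hx0, abs_of_nonpos (by linarith)]
    linarith
  rw [abs_le] at t₁ t₂ t₃ t₄ ⊢
  unfold Lderiv
  constructor <;> linarith

lemma sqrt_five_sub_one_div_two_mem_Icc : (√5 - 1) / 2 ∈ Icc (0.618 : ℝ) 0.619 := by
  have h5 := sq_sqrt (show (0 : ℝ) ≤ 5 by norm_num)
  have h0 := sqrt_nonneg 5
  constructor <;> nlinarith

theorem stmt19
    (φ : ℝ) (hφ : φ = (Real.sqrt 5 - 1) / 2)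
    (L : ℝ → ℝ)
    (hL : ∀ x, L x = 2 * φ * (1 - x ^ 2) * Real.log (x⁻¹ ^ 2 - 1) - 4 * φ
        - 2 * x ^ 2 * Real.log x + 2 * (x ^ 2 - 1) * Real.log (1 - x) + x
        + 2 * Real.log x + 1) :
    ∀ a ∈ Set.Icc φ (0.77 : ℝ), ∀ b ∈ Set.Icc φ (0.77 : ℝ),
      |L a - L b| ≤ 15.5 * |a - b| := by
  have hφ' : φ ∈ Icc (0.618 : ℝ) 0.619 := hφ ▸ sqrt_five_sub_one_div_two_mem_Icc
  obtain rfl : L = Lfun φ := funext hL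
  have hderiv (x : ℝ) (hx : x ∈ Icc φ 0.77) :
      HasDerivWithinAt (Lfun φ) (Lderiv φ x) (Icc φ 0.77) x :=
    (hasDerivAt_Lfun φ (by linarith [hx.1, hφ'.1]) (by linarith [hx.2])).hasDerivWithinAt
  have hbound (x : ℝ) (hx : x ∈ Icc φ 0.77) : ‖Lderiv φ x‖ ≤ 15.5 :=
    abs_Lderiv_le hφ' (Icc_subset_Icc_left hφ'.1 hx)
  intro a ha b hb
  simpa only [Real.norm_eq_abs] using
    (convex_Icc φ 0.77).norm_image_sub_le_of_norm_hasDerivWithin_le hderiv hbound hb ha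
end
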